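/- arXiv:2202.03307 — 5 statements merged into one kernel-verified Lean document; each statement's English description precedes it below -/
import Mathlib

section
/- The function (a,b) ↦ χ(a+b>1)/((a+b)² ⟨a−b⟩²) is integrable in the following sense: for every fixed k ∈ ℝ³, ∫_{ℝ³} χ(|k|+|ξ|>1) / ((|k|+|ξ|)² ⟨|k|−|ξ|⟩²) dξ ≤ C for a constant C independent of k. -/
open MeasureTheory Real Set Module

/-!
Integrating in polar coordinates turns the integral into `3 |B₁| ∫₀^∞ r² farKernel |k| r dr`.
For `r > 0` the factor `r² / (|k| + r)²` is at most `1`, so the radial integrand is dominated by the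
shifted Cauchy density `(1 + (|k| - r)²)⁻¹`, whose integral over `ℝ` is `π` whatever `k` is.
-/

noncomputable def farKernel (a r : ℝ) : ℝ :=
  if 1 < a + r then 1 / ((a + r) ^ 2 * (1 + (a - r) ^ 2)) else 0

lemma sq_mul_farKernel_nonneg (a r : ℝ) : 0 ≤ r ^ 2 * farKernel a r := by
  unfold farKernel
  split_ifs <;> positivity

lemma sq_mul_farKernel_le {a r : ℝ} (ha : 0 ≤ a) (hr : 0 ≤ r) :
    r ^ 2 * farKernel a r ≤ (1 + (a - r) ^ 2)⁻¹ := by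
  unfold farKernel
  split_ifs with h
  · have hsq : r ^ 2 ≤ (a + r) ^ 2 := by gcongr; linarith
    calc r ^ 2 * (1 / ((a + r) ^ 2 * (1 + (a - r) ^ 2)))
        = r ^ 2 / (a + r) ^ 2 * (1 + (a - r) ^ 2)⁻¹ := by field_simp
      _ ≤ 1 * (1 + (a - r) ^ 2)⁻¹ := by
          gcongr
          exact div_le_one_of_le₀ hsq (sq_nonneg _)
      _ = (1 + (a - r) ^ 2)⁻¹ := one_mul _
  · rw [mul_zero]
    positivity

lemma integrable_inv_one_add_sq_sub (a : ℝ) : Integrable fun r : ℝ ↦ (1 + (a - r) ^ 2)⁻¹ :=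
  integrable_inv_one_add_sq.comp_sub_left a

lemma setIntegral_Ioi_inv_one_add_sq_sub_le (a : ℝ) :
    ∫ r in Ioi 0, (1 + (a - r) ^ 2)⁻¹ ≤ π :=
  calc ∫ r in Ioi 0, (1 + (a - r) ^ 2)⁻¹ ≤ ∫ r, (1 + (a - r) ^ 2)⁻¹ :=
        setIntegral_le_integral (integrable_inv_one_add_sq_sub a)
          (.of_forall fun _ ↦ by positivity)
    _ = π := by
        rw [integral_sub_left_eq_self (fun x : ℝ ↦ (1 + x ^ 2)⁻¹) volume a]
        exact integral_univ_inv_one_add_sq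

lemma integral_fun_norm_le_of_le {E : Type*} [NormedAddCommGroup E] [NormedSpace ℝ E]
    [Nontrivial E] [FiniteDimensional ℝ E] [MeasurableSpace E] [BorelSpace E] (μ : Measure E)
    [μ.IsAddHaarMeasure] {f g : ℝ → ℝ}
    (hf : ∀ r, 0 < r → 0 ≤ r ^ (finrank ℝ E - 1) * f r)
    (hfg : ∀ r, 0 < r → r ^ (finrank ℝ E - 1) * f r ≤ g r) (hg : IntegrableOn g (Ioi 0)) :
    ∫ x, f ‖x‖ ∂μ ≤ finrank ℝ E * μ.real (Metric.ball 0 1) * ∫ r in Ioi 0, g r := by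
  have hradial : ∫ r in Ioi 0, r ^ (finrank ℝ E - 1) * f r ≤ ∫ r in Ioi 0, g r :=
    integral_mono_of_nonneg (ae_restrict_of_forall_mem measurableSet_Ioi hf) hg
      (ae_restrict_of_forall_mem measurableSet_Ioi hfg)
  simp only [integral_fun_norm_addHaar μ f, nsmul_eq_mul, smul_eq_mul, mul_assoc]
  gcongr

/-- Uniform bound: for every `k ∈ ℝ³`,
`∫_{ℝ³} χ(|k|+|ξ|>1) / ((|k|+|ξ|)² ⟨|k|−|ξ|⟩²) dξ ≤ C` with `C` independent of `k`,
where `⟨t⟩² = 1 + t²`. -/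
theorem integral_far_kernel_uniform_bound :
    ∃ C : ℝ, 0 < C ∧ ∀ k : EuclideanSpace ℝ (Fin 3),
      (∫ ξ : EuclideanSpace ℝ (Fin 3),
          (if 1 < ‖k‖ + ‖ξ‖ then
            1 / ((‖k‖ + ‖ξ‖) ^ 2 * (1 + (‖k‖ - ‖ξ‖) ^ 2)) else 0)) ≤ C := by
  set V := volume.real (Metric.ball (0 : EuclideanSpace ℝ (Fin 3)) 1)
  have hV : 0 < V :=
    ENNReal.toReal_pos (Metric.measure_ball_pos _ _ one_pos).ne' measure_ball_lt_top.ne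
  refine ⟨3 * V * π, by positivity, fun k ↦ ?_⟩
  calc ∫ ξ : EuclideanSpace ℝ (Fin 3), farKernel ‖k‖ ‖ξ‖
      ≤ finrank ℝ (EuclideanSpace ℝ (Fin 3)) * V *
          ∫ r in Ioi 0, (1 + (‖k‖ - r) ^ 2)⁻¹ :=
        integral_fun_norm_le_of_le volume
          (fun r _ ↦ by simpa using sq_mul_farKernel_nonneg ‖k‖ r)
          (fun r hr ↦ by simpa using sq_mul_farKernel_le (norm_nonneg k) hr.le)
          (integrable_inv_one_add_sq_sub _).integrableOn
    _ ≤ 3 * V * π := by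
        rw [finrank_euclideanSpace_fin, Nat.cast_ofNat]
        gcongr
        exact setIntegral_Ioi_inv_one_add_sq_sub_le _
end

section
/- Schur-type kernel bound, L¹ side: with K(x,y) as above (nonnegative W₁, W₂ ∈ L¹(ℝ³)), the operator Tψ(x) = ∫ K(x,y)ψ(y) dy is bounded on L¹(ℝ³): ‖Tψ‖_{L¹} ≤ C (‖W₁‖_{𝒦} + ‖W₁‖_{L¹}) ‖W₂‖_{L¹} ‖ψ‖_{L¹}, where ‖W₁‖_{𝒦} := ∫ |W₁(η)| ⟨η⟩/|η| dη. -/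
/-!
Integrating first in `x`, Tonelli's theorem reduces the `L¹` bound to Schur's dual condition
`sup_y ∫ K(x, y) dx < ∞`. By translation invariance of `dx` the `x`-integral of
`W₁(x - k)` is `‖W₁‖₁`, and after exchanging `k` and `z` what remains is
`∫ N(k, w) dk`, where `N(k, w)` is the kernel's weight at `(|k|, |w|)` (`w = z - y`).
In polar coordinates the volume factor `r²` cancels the `(|k| + |w|)⁻²` decay:
`s² N(s, t) ≤ 2 / (1 + (s - t)²)`, whose integral over `ℝ` is `2π`. Hence
`∫ N(k, w) dk ≤ 4π · 2π` uniformly in `w`.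
-/

open MeasureTheory Real Set
open scoped ENNReal

theorem AEMeasurable.exists_measurable_ge_ae_eq {α : Type*} [MeasurableSpace α] {μ : Measure α}
    {f : α → ℝ≥0∞} (hf : AEMeasurable f μ) : ∃ g, Measurable g ∧ f ≤ g ∧ g =ᵐ[μ] f := by
  classical
  set T := toMeasurable μ {x | f x ≠ hf.mk f x}
  have hT : μ T = 0 := by
    rw [measure_toMeasurable]
    exact hf.ae_eq_mk
  refine ⟨T.piecewise ⊤ (hf.mk f),
    measurable_const.piecewise (measurableSet_toMeasurable _ _) hf.measurable_mk, fun x => ?_, ?_⟩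
  · by_cases hx : x ∈ T
    · simp [hx]
    · simp only [piecewise_eq_of_notMem _ _ _ hx]
      exact (not_not.1 fun h => hx (subset_toMeasurable _ _ h)).le
  · filter_upwards [measure_eq_zero_iff_ae_notMem.1 hT, hf.ae_eq_mk] with x hx hfx
    simp [piecewise_eq_of_notMem _ _ _ hx, hfx]

section SchurTest

variable {α β : Type*} [MeasurableSpace α] [MeasurableSpace β] {μ : Measure α} {ν : Measure β}
  [SFinite μ] [SFinite ν]

theorem lintegral_lintegral_mul_le_of_lintegral_le {K : α → β → ℝ≥0∞}
    (hK : Measurable (Function.uncurry K)) {M : ℝ≥0∞} (hM : ∀ y, ∫⁻ x, K x y ∂μ ≤ M)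
    {q : β → ℝ≥0∞} (hq : AEMeasurable q ν) :
    ∫⁻ x, ∫⁻ y, K x y * q y ∂ν ∂μ ≤ M * ∫⁻ y, q y ∂ν :=
  calc ∫⁻ x, ∫⁻ y, K x y * q y ∂ν ∂μ = ∫⁻ y, (∫⁻ x, K x y ∂μ) * q y ∂ν := by
        rw [lintegral_lintegral_swap (hK.aemeasurable.mul hq.comp_snd)]
        simp_rw [lintegral_mul_const _ hK.of_uncurry_right]
    _ ≤ ∫⁻ y, M * q y ∂ν := by gcongr with y; exact hM y
    _ = M * ∫⁻ y, q y ∂ν := lintegral_const_mul'' _ hq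

theorem integral_abs_integral_mul_le {K : α → β → ℝ} {Kₑ : α → β → ℝ≥0∞}
    (hKₑ : Measurable (Function.uncurry Kₑ)) (hK : ∀ x y, ‖K x y‖ₑ ≤ Kₑ x y) {M : ℝ≥0∞}
    (hM_top : M ≠ ∞) (hM : ∀ y, ∫⁻ x, Kₑ x y ∂μ ≤ M) {ψ : β → ℝ} (hψ : Integrable ψ ν) :
    ∫ x, |∫ y, K x y * ψ y ∂ν| ∂μ ≤ M.toReal * ∫ y, |ψ y| ∂ν := by
  have hpt (x : α) : ‖∫ y, K x y * ψ y ∂ν‖ₑ ≤ ∫⁻ y, Kₑ x y * ‖ψ y‖ₑ ∂ν :=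
    (enorm_integral_le_lintegral_enorm _).trans
      (lintegral_mono fun y => by rw [enorm_mul]; gcongr; exact hK x y)
  calc ∫ x, |∫ y, K x y * ψ y ∂ν| ∂μ ≤ (∫⁻ x, ‖∫ y, K x y * ψ y ∂ν‖ₑ ∂μ).toReal := by
        simpa only [Real.norm_eq_abs, abs_abs, ← Real.enorm_eq_ofReal_abs] using
          (le_abs_self _).trans
            (norm_integral_le_lintegral_norm (μ := μ) fun x => |∫ y, K x y * ψ y ∂ν|)
    _ ≤ (M * ∫⁻ y, ‖ψ y‖ₑ ∂ν).toReal :=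
        ENNReal.toReal_mono (ENNReal.mul_ne_top hM_top hψ.hasFiniteIntegral.ne)
          ((lintegral_mono hpt).trans
            (lintegral_lintegral_mul_le_of_lintegral_le hKₑ hM hψ.aemeasurable.enorm))
    _ = M.toReal * ∫ y, |ψ y| ∂ν := by
        rw [ENNReal.toReal_mul, ← integral_norm_eq_lintegral_enorm hψ.aestronglyMeasurable]
        simp only [Real.norm_eq_abs]

end SchurTest

section Convolution

variable {G : Type*} [MeasurableSpace G] [AddGroup G] [MeasurableAdd₂ G] [MeasurableNeg G]
  {μ : Measure G} [SFinite μ] [μ.IsAddRightInvariant]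

theorem lintegral_lintegral_sub_mul {a F : G → ℝ≥0∞} (ha : Measurable a) (hF : Measurable F) :
    ∫⁻ x, ∫⁻ k, a (x - k) * F k ∂μ ∂μ = (∫⁻ x, a x ∂μ) * ∫⁻ k, F k ∂μ := by
  rw [lintegral_lintegral_swap (by fun_prop)]
  calc ∫⁻ k, ∫⁻ x, a (x - k) * F k ∂μ ∂μ = ∫⁻ k, (∫⁻ x, a x ∂μ) * F k ∂μ :=
        lintegral_congr fun k => by
          rw [lintegral_mul_const _ (by fun_prop), lintegral_sub_right_eq_self]
    _ = _ := lintegral_const_mul _ hF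

theorem integral_abs_integral_convolution_kernel_mul_le {N : G → G → ℝ}
    (hN : Measurable (Function.uncurry N)) {C : ℝ} (hC₀ : 0 ≤ C)
    (hC : ∀ w, ∫⁻ k, ‖N k w‖ₑ ∂μ ≤ ENNReal.ofReal C)
    {W₁ W₂ ψ : G → ℝ} (hW₁ : Integrable W₁ μ) (hW₂ : Integrable W₂ μ) (hψ : Integrable ψ μ) :
    ∫ x, |∫ y, (∫ k, ∫ z, W₁ (x - k) * W₂ z * N k (z - y) ∂μ ∂μ) * ψ y ∂μ| ∂μ
      ≤ C * (∫ x, ‖W₁ x‖ ∂μ) * (∫ x, ‖W₂ x‖ ∂μ) * ∫ y, |ψ y| ∂μ := by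
  -- Measurable majorants of `‖W₁‖ₑ`, `‖W₂‖ₑ` make the dominating kernel jointly measurable.
  obtain ⟨a, ha, hW₁a, ha_ae⟩ := hW₁.aemeasurable.enorm.exists_measurable_ge_ae_eq
  obtain ⟨b, hb, hW₂b, hb_ae⟩ := hW₂.aemeasurable.enorm.exists_measurable_ge_ae_eq
  have hintegrand : Measurable fun p : (G × G) × G => ‖N p.1.1 (p.2 - p.1.2)‖ₑ * b p.2 :=
    (hN.comp (measurable_fst.fst.prodMk (measurable_snd.sub measurable_fst.snd))).enorm.mul
      (hb.comp measurable_snd)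
  have hF : Measurable (Function.uncurry fun k y => ∫⁻ z, ‖N k (z - y)‖ₑ * b z ∂μ) :=
    hintegrand.lintegral_prod_right'
  have hKₑ : Measurable (Function.uncurry fun x y =>
      ∫⁻ k, a (x - k) * ∫⁻ z, ‖N k (z - y)‖ₑ * b z ∂μ ∂μ) :=
    Measurable.lintegral_prod_right' (f := fun p : (G × G) × G => a (p.1.1 - p.2) * _)
      ((ha.comp (measurable_fst.fst.sub measurable_snd)).mul
        (hF.comp (measurable_snd.prodMk measurable_fst.snd)))
  have hK (x y : G) : ‖∫ k, ∫ z, W₁ (x - k) * W₂ z * N k (z - y) ∂μ ∂μ‖ₑ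
      ≤ ∫⁻ k, a (x - k) * ∫⁻ z, ‖N k (z - y)‖ₑ * b z ∂μ ∂μ :=
    calc _ ≤ ∫⁻ k, ∫⁻ z, ‖W₁ (x - k) * W₂ z * N k (z - y)‖ₑ ∂μ ∂μ :=
          (enorm_integral_le_lintegral_enorm _).trans
            (lintegral_mono fun k => enorm_integral_le_lintegral_enorm _)
      _ ≤ ∫⁻ k, ∫⁻ z, a (x - k) * (‖N k (z - y)‖ₑ * b z) ∂μ ∂μ := by
          gcongr with k z
          rw [enorm_mul, enorm_mul, mul_right_comm, mul_assoc]
          gcongr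
          exacts [hW₁a _, hW₂b z]
      _ = _ := lintegral_congr fun k => lintegral_const_mul _
            ((hN.comp (measurable_const.prodMk (measurable_id.sub_const y))).enorm.mul hb)
  have hA : ∫⁻ x, a x ∂μ = ∫⁻ x, ‖W₁ x‖ₑ ∂μ := lintegral_congr_ae ha_ae
  have hB : ∫⁻ x, b x ∂μ = ∫⁻ x, ‖W₂ x‖ₑ ∂μ := lintegral_congr_ae hb_ae
  refine (integral_abs_integral_mul_le hKₑ hK
    (M := (∫⁻ x, a x ∂μ) * (ENNReal.ofReal C * ∫⁻ z, b z ∂μ)) ?_ (fun y => ?_) hψ).trans_eq ?_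
  · rw [hA, hB]
    exact ENNReal.mul_ne_top hW₁.hasFiniteIntegral.ne
      (ENNReal.mul_ne_top ENNReal.ofReal_ne_top hW₂.hasFiniteIntegral.ne)
  · rw [lintegral_lintegral_sub_mul ha hF.of_uncurry_right]
    gcongr
    exact lintegral_lintegral_mul_le_of_lintegral_le (K := fun k z => ‖N k (z - y)‖ₑ)
      (hN.comp (measurable_fst.prodMk (measurable_snd.sub_const y))).enorm (fun z => hC _)
      hb.aemeasurable
  · rw [ENNReal.toReal_mul, ENNReal.toReal_mul, ENNReal.toReal_ofReal hC₀, hA, hB,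
      integral_norm_eq_lintegral_enorm hW₁.aestronglyMeasurable,
      integral_norm_eq_lintegral_enorm hW₂.aestronglyMeasurable]
    ring

end Convolution

noncomputable def radialWeight (s t : ℝ) : ℝ :=
  √(1 + s ^ 2) / s * if 1 < s + t then 1 / ((s + t) ^ 2 * (1 + (s - t) ^ 2)) else 0

theorem radialWeight_nonneg {s : ℝ} (hs : 0 ≤ s) (t : ℝ) : 0 ≤ radialWeight s t := by
  unfold radialWeight
  split_ifs <;> positivity

@[fun_prop]
theorem measurable_radialWeight : Measurable (Function.uncurry radialWeight) := by
  unfold radialWeight Function.uncurry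
  refine Measurable.mul (by fun_prop) (Measurable.ite ?_ (by fun_prop) measurable_const)
  exact measurableSet_lt measurable_const (by fun_prop)

theorem sq_mul_radialWeight_le {s t : ℝ} (hs : 0 < s) (ht : 0 ≤ t) :
    s ^ 2 * radialWeight s t ≤ 2 * (1 + (s - t) ^ 2)⁻¹ := by
  unfold radialWeight
  split_ifs with h
  · have hsqrt : √(1 + s ^ 2) ≤ 1 + s := sqrt_le_iff.2 ⟨by positivity, by nlinarith⟩
    have hD : 0 < (s + t) ^ 2 * (1 + (s - t) ^ 2) := by positivity
    calc s ^ 2 * (√(1 + s ^ 2) / s * (1 / ((s + t) ^ 2 * (1 + (s - t) ^ 2))))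
        = s * √(1 + s ^ 2) / (s + t) ^ 2 * (1 + (s - t) ^ 2)⁻¹ := by field_simp
      _ ≤ 2 * (1 + (s - t) ^ 2)⁻¹ := by
        gcongr
        rw [div_le_iff₀ (by positivity)]
        -- on `{1 < s + t}`: `s √(1 + s²) ≤ s (1 + s) ≤ 2 (s + t)²`
        nlinarith [mul_le_mul_of_nonneg_left hsqrt hs.le]
  · simp only [mul_zero]
    positivity

theorem integrableOn_sq_mul_radialWeight {t : ℝ} (ht : 0 ≤ t) :
    IntegrableOn (fun s => s ^ 2 * radialWeight s t) (Ioi 0) := by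
  refine Integrable.mono' ((integrable_inv_one_add_sq.comp_sub_right t).const_mul 2).integrableOn
    (by fun_prop) ((ae_restrict_iff' measurableSet_Ioi).2 (.of_forall fun s (hs : 0 < s) => ?_))
  rw [Real.norm_of_nonneg (by have := radialWeight_nonneg hs.le t; positivity)]
  exact sq_mul_radialWeight_le hs ht

theorem integrable_radialWeight_norm {t : ℝ} (ht : 0 ≤ t) :
    Integrable (fun k : EuclideanSpace ℝ (Fin 3) => radialWeight ‖k‖ t) := by
  refine (integrable_fun_norm_addHaar volume (f := fun s => radialWeight s t)).2 ?_
  simpa using integrableOn_sq_mul_radialWeight ht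

theorem integral_radialWeight_norm_le {t : ℝ} (ht : 0 ≤ t) :
    ∫ k : EuclideanSpace ℝ (Fin 3), radialWeight ‖k‖ t ≤ 8 * π ^ 2 := by
  have hint : Integrable fun s : ℝ => 2 * (1 + (s - t) ^ 2)⁻¹ :=
    (integrable_inv_one_add_sq.comp_sub_right t).const_mul 2
  have hradial : ∫ s in Ioi 0, s ^ 2 * radialWeight s t ≤ 2 * π :=
    calc ∫ s in Ioi 0, s ^ 2 * radialWeight s t ≤ ∫ s in Ioi 0, 2 * (1 + (s - t) ^ 2)⁻¹ :=
          setIntegral_mono_on (integrableOn_sq_mul_radialWeight ht) hint.integrableOn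
            measurableSet_Ioi fun s hs => sq_mul_radialWeight_le hs ht
      _ ≤ ∫ s, 2 * (1 + (s - t) ^ 2)⁻¹ :=
          setIntegral_le_integral hint (.of_forall fun s => by positivity)
      _ = 2 * π := by
          rw [integral_const_mul, integral_sub_right_eq_self (fun s => (1 + s ^ 2)⁻¹),
            integral_univ_inv_one_add_sq]
  rw [integral_fun_norm_addHaar volume (fun s => radialWeight s t)]
  have hball : volume.real (Metric.ball (0 : EuclideanSpace ℝ (Fin 3)) 1) = π * 4 / 3 := by
    rw [measureReal_def, EuclideanSpace.volume_ball_fin_three, ENNReal.ofReal_one, one_pow,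
      one_mul, ENNReal.toReal_ofReal (by positivity)]
  simp only [finrank_euclideanSpace_fin, hball, smul_eq_mul]
  norm_num
  nlinarith [pi_pos]

theorem lintegral_enorm_radialWeight_norm_le {t : ℝ} (ht : 0 ≤ t) :
    ∫⁻ k : EuclideanSpace ℝ (Fin 3), ‖radialWeight ‖k‖ t‖ₑ ≤ ENNReal.ofReal (8 * π ^ 2) := by
  rw [← ofReal_integral_norm_eq_lintegral_enorm (integrable_radialWeight_norm ht)]
  refine ENNReal.ofReal_le_ofReal (le_of_eq_of_le (integral_congr_ae (.of_forall fun k => ?_))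
    (integral_radialWeight_norm_le ht))
  exact Real.norm_of_nonneg (radialWeight_nonneg (norm_nonneg k) t)

/-- Schur-type kernel bound, `L¹` side: with the same kernel
`K(x,y) = ∫∫ W₁(x−k) W₂(z) (⟨k⟩/|k|) χ(|k|+|z−y|>1)/((|k|+|z−y|)²⟨|k|−|z−y|⟩²) dz dk`,
the operator `Tψ(x) = ∫ K(x,y)ψ(y) dy` satisfies
`‖Tψ‖_{L¹} ≤ C (‖W₁‖_𝒦 + ‖W₁‖_{L¹}) ‖W₂‖_{L¹} ‖ψ‖_{L¹}`. -/
theorem schur_kernel_L1_bound :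
    ∃ C : ℝ, 0 < C ∧
      ∀ (W₁ W₂ : EuclideanSpace ℝ (Fin 3) → ℝ),
        (∀ η, 0 ≤ W₁ η) → (∀ z, 0 ≤ W₂ z) →
        Integrable W₁ → Integrable W₂ →
        Integrable (fun η : EuclideanSpace ℝ (Fin 3) =>
          W₁ η * Real.sqrt (1 + ‖η‖ ^ 2) / ‖η‖) →
        ∀ ψ : EuclideanSpace ℝ (Fin 3) → ℝ, Integrable ψ →
          (∫ x : EuclideanSpace ℝ (Fin 3),
              |∫ y : EuclideanSpace ℝ (Fin 3),
                (∫ k : EuclideanSpace ℝ (Fin 3), ∫ z : EuclideanSpace ℝ (Fin 3),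
                  W₁ (x - k) * W₂ z * (Real.sqrt (1 + ‖k‖ ^ 2) / ‖k‖) *
                    (if 1 < ‖k‖ + ‖z - y‖ then
                      1 / ((‖k‖ + ‖z - y‖) ^ 2 * (1 + (‖k‖ - ‖z - y‖) ^ 2)) else 0))
                  * ψ y|)
            ≤ C * ((∫ η : EuclideanSpace ℝ (Fin 3),
                      W₁ η * Real.sqrt (1 + ‖η‖ ^ 2) / ‖η‖)
                    + ∫ η : EuclideanSpace ℝ (Fin 3), W₁ η)
                * (∫ z : EuclideanSpace ℝ (Fin 3), W₂ z)
                * (∫ y : EuclideanSpace ℝ (Fin 3), |ψ y|) := by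
  refine ⟨8 * π ^ 2, by positivity, fun W₁ W₂ hW₁ hW₂ hW₁i hW₂i _ ψ hψ => ?_⟩
  have hbound := integral_abs_integral_convolution_kernel_mul_le
    (N := fun k w : EuclideanSpace ℝ (Fin 3) => radialWeight ‖k‖ ‖w‖)
    (measurable_radialWeight.comp (measurable_fst.norm.prodMk measurable_snd.norm))
    (by positivity) (fun w => lintegral_enorm_radialWeight_norm_le (norm_nonneg w)) hW₁i hW₂i hψ
  have hnorm₁ (η : EuclideanSpace ℝ (Fin 3)) : ‖W₁ η‖ = W₁ η := Real.norm_of_nonneg (hW₁ η)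
  have hnorm₂ (z : EuclideanSpace ℝ (Fin 3)) : ‖W₂ z‖ = W₂ z := Real.norm_of_nonneg (hW₂ z)
  simp only [hnorm₁, hnorm₂, radialWeight, mul_assoc] at hbound ⊢
  refine hbound.trans ?_
  have h𝒦 : 0 ≤ ∫ η : EuclideanSpace ℝ (Fin 3), W₁ η * √(1 + ‖η‖ ^ 2) / ‖η‖ :=
    integral_nonneg fun η => by have := hW₁ η; positivity
  gcongr
  · exact mul_nonneg (integral_nonneg hW₂) (integral_nonneg fun y => abs_nonneg _)
  · exact le_add_of_nonneg_left h𝒦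
end

section
/- For every k ∈ ℝ³ and every R ≥ 0, ∫_{ℝ³} (⟨ξ⟩/|ξ|) · χ(|ξ| + R > 1) / ((|ξ| + R)² ⟨|ξ| − R⟩²) dξ ≤ C for an absolute constant C (independent of R). -/
/-!
In polar coordinates the integral is `4π ∫₀^∞ y² f_R(y) dy`, where `f_R` is the radial profile
of the integrand. On the region `y + R > 1` one has `√(1 + y²) ≤ 1 + y ≤ 2 (y + R)` and
`y ≤ y + R`, so `y² f_R(y) ≤ 2 / (1 + (y - R)²)`: a Cauchy kernel centred at `R`, whose integral
over `ℝ` is `π` whatever `R` is.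
-/

open MeasureTheory Real Set

noncomputable def farKernelProfile (R y : ℝ) : ℝ :=
  (√(1 + y ^ 2) / y) * (if 1 < y + R then 1 / ((y + R) ^ 2 * (1 + (y - R) ^ 2)) else 0)

lemma sqrt_one_add_sq_le_one_add {y : ℝ} (hy : 0 ≤ y) : √(1 + y ^ 2) ≤ 1 + y :=
  Real.sqrt_le_iff.2 ⟨by linarith, by nlinarith⟩

lemma mul_one_add_le_two_mul_add_sq {y R : ℝ} (hy : 0 ≤ y) (hR : 0 ≤ R) (h : 1 < y + R) :
    y * (1 + y) ≤ 2 * (y + R) ^ 2 := by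
  nlinarith [mul_le_mul (le_add_of_nonneg_right hR : y ≤ y + R)
    (by linarith : 1 + y ≤ 2 * (y + R)) (by linarith) (by linarith)]

lemma farKernelProfile_nonneg (R : ℝ) {y : ℝ} (hy : 0 < y) : 0 ≤ farKernelProfile R y := by
  unfold farKernelProfile
  split_ifs with h
  · positivity
  · simp

lemma sq_mul_farKernelProfile_le {R y : ℝ} (hR : 0 ≤ R) (hy : 0 < y) :
    y ^ 2 * farKernelProfile R y ≤ 2 * (1 + (y - R) ^ 2)⁻¹ := by
  unfold farKernelProfile
  split_ifs with h
  · calc y ^ 2 * (√(1 + y ^ 2) / y * (1 / ((y + R) ^ 2 * (1 + (y - R) ^ 2))))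
        = y * √(1 + y ^ 2) / (y + R) ^ 2 * (1 + (y - R) ^ 2)⁻¹ := by
          field_simp
      _ ≤ y * (1 + y) / (y + R) ^ 2 * (1 + (y - R) ^ 2)⁻¹ := by
          gcongr
          exact sqrt_one_add_sq_le_one_add hy.le
      _ ≤ 2 * (1 + (y - R) ^ 2)⁻¹ := by
          gcongr
          rw [div_le_iff₀ (by positivity)]
          exact mul_one_add_le_two_mul_add_sq hy.le hR h
  · simp only [mul_zero]
    positivity

lemma setIntegral_sq_mul_farKernelProfile_le {R : ℝ} (hR : 0 ≤ R) :
    ∫ y in Ioi (0 : ℝ), y ^ 2 * farKernelProfile R y ≤ 2 * π := by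
  have hCauchy : Integrable fun y : ℝ ↦ 2 * (1 + (y - R) ^ 2)⁻¹ :=
    (integrable_inv_one_add_sq.comp_sub_right R).const_mul 2
  calc ∫ y in Ioi (0 : ℝ), y ^ 2 * farKernelProfile R y
      ≤ ∫ y in Ioi (0 : ℝ), 2 * (1 + (y - R) ^ 2)⁻¹ := by
        refine integral_mono_of_nonneg ?_ hCauchy.integrableOn ?_ <;>
          refine (ae_restrict_iff' measurableSet_Ioi).2 (.of_forall fun y (hy : 0 < y) ↦ ?_)
        · exact mul_nonneg (sq_nonneg y) (farKernelProfile_nonneg R hy)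
        · exact sq_mul_farKernelProfile_le hR hy
    _ ≤ ∫ y, 2 * (1 + (y - R) ^ 2)⁻¹ :=
        setIntegral_le_integral hCauchy (.of_forall fun y ↦ by positivity)
    _ = 2 * π := by
        rw [integral_const_mul,
          integral_sub_right_eq_self (fun y : ℝ ↦ (1 + y ^ 2)⁻¹) R, integral_univ_inv_one_add_sq]

/-- Uniform bound: for every `R ≥ 0`,
`∫_{ℝ³} (⟨ξ⟩/|ξ|) χ(|ξ|+R>1)/((|ξ|+R)² ⟨|ξ|−R⟩²) dξ ≤ C` with an absolute constant `C`. -/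
theorem integral_weighted_far_kernel_uniform_bound :
    ∃ C : ℝ, 0 < C ∧ ∀ R : ℝ, 0 ≤ R →
      (∫ ξ : EuclideanSpace ℝ (Fin 3),
          (Real.sqrt (1 + ‖ξ‖ ^ 2) / ‖ξ‖) *
            (if 1 < ‖ξ‖ + R then
              1 / ((‖ξ‖ + R) ^ 2 * (1 + (‖ξ‖ - R) ^ 2)) else 0)) ≤ C := by
  refine ⟨8 * π ^ 2, by positivity, fun R hR ↦ ?_⟩
  have hball : volume.real (Metric.ball (0 : EuclideanSpace ℝ (Fin 3)) 1) = 4 / 3 * π := by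
    rw [measureReal_def, EuclideanSpace.volume_ball_fin_three, ENNReal.ofReal_one, one_pow,
      one_mul, ENNReal.toReal_ofReal (by positivity)]
    ring
  calc ∫ ξ : EuclideanSpace ℝ (Fin 3), farKernelProfile R ‖ξ‖
      = 3 * (4 / 3 * π * ∫ y in Ioi (0 : ℝ), y ^ 2 * farKernelProfile R y) := by
        rw [integral_fun_norm_addHaar, finrank_euclideanSpace_fin, hball]
        norm_num
    _ ≤ 3 * (4 / 3 * π * (2 * π)) := by
        gcongr
        exact setIntegral_sq_mul_farKernelProfile_le hR
    _ = 8 * π ^ 2 := by ring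
end

section
/- Hölder-based y-integration bound: for p ∈ (1, ∞) with conjugate exponent p', for every fixed η, z ∈ ℝ³ and ψ ∈ L^p(ℝ³), ∫_{ℝ³} χ(|x−η|+|z−y|>1)/((|x−η|+|z−y|)² ⟨|x−η|−|z−y|⟩) |ψ(y)| dy ≤ C_p ‖ψ‖_{L^p}, where C_p depends only on p (uniform in x, η, z), because the kernel y ↦ χ(R+|z−y|>1)/((R+|z−y|)²⟨R−|z−y|⟩) belongs to L^{p'}(ℝ³) with norm bounded uniformly in R := |x−η| ≥ 0 and z. -/
/-!
By Hölder's inequality it suffices to bound the `L^q` norm, `q = p / (p - 1)`, of the kernel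
`y ↦ k_R(‖z - y‖)` uniformly in `R ≥ 0` and `z`. After translating `z` to the origin and passing
to polar coordinates, the Jacobian `r²` is absorbed by `(R + r)^{-2q} ≤ (R + r)^{-2}`, valid
because `R + r > 1` on the support, and what remains is `∫ ⟨r - R⟩^{-q} dr ≤ ∫_ℝ ⟨s⟩^{-q} ds`,
which is finite since `q > 1`.
-/

open MeasureTheory Real Set
open scoped ENNReal

namespace MeasureTheory

section

variable {α : Type*} [MeasurableSpace α] {μ : Measure α}

theorem integral_mul_le_eLpNorm_mul_eLpNorm {p q : ℝ≥0∞} [p.HolderConjugate q] {f g : α → ℝ}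
    (hf : MemLp f p μ) (hg : MemLp g q μ) :
    ∫ x, f x * g x ∂μ ≤ (eLpNorm f p μ).toReal * (eLpNorm g q μ).toReal := by
  have holder : eLpNorm (fun x => f x * g x) 1 μ ≤ eLpNorm f p μ * eLpNorm g q μ := by
    simpa using eLpNorm_le_eLpNorm_mul_eLpNorm'_of_norm hf.1 hg.1 (· * ·) 1
      (.of_forall fun x => by simp [norm_mul])
  calc ∫ x, f x * g x ∂μ ≤ ‖∫ x, f x * g x ∂μ‖ := le_norm_self _
    _ ≤ (eLpNorm (fun x => f x * g x) 1 μ).toReal := by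
      simpa only [eLpNorm_one_eq_lintegral_enorm, ofReal_norm] using
        norm_integral_le_lintegral_norm (μ := μ) fun x => f x * g x
    _ ≤ (eLpNorm f p μ * eLpNorm g q μ).toReal :=
      ENNReal.toReal_mono (ENNReal.mul_ne_top hf.eLpNorm_ne_top hg.eLpNorm_ne_top) holder
    _ = _ := ENNReal.toReal_mul

end

section

variable {E : Type*} [NormedAddCommGroup E] [InnerProductSpace ℝ E] [FiniteDimensional ℝ E]
  [MeasurableSpace E] [BorelSpace E] [Nontrivial E] (μ : Measure E) [μ.IsAddHaarMeasure]

theorem lintegral_comp_norm_addHaar {g : ℝ → ℝ≥0∞} (hg : Measurable g) :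
    ∫⁻ x, g ‖x‖ ∂μ = μ.toSphere univ *
      ∫⁻ r in Ioi (0 : ℝ), ENNReal.ofReal (r ^ (Module.finrank ℝ E - 1)) * g r := by
  have hg' : Measurable fun x : Metric.sphere (0 : E) 1 × Ioi (0 : ℝ) => g x.2 :=
    hg.comp (measurable_subtype_coe.comp measurable_snd)
  calc ∫⁻ x, g ‖x‖ ∂μ = ∫⁻ x : ({0}ᶜ : Set E), g ‖(x : E)‖ ∂(μ.comap (↑)) := by
        rw [lintegral_subtype_comap (measurableSet_singleton _).compl fun x => g ‖x‖,
          restrict_compl_singleton]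
    _ = ∫⁻ x, g x.2 ∂μ.toSphere.prod (.volumeIoiPow (Module.finrank ℝ E - 1)) := by
        simpa using μ.measurePreserving_homeomorphUnitSphereProd.lintegral_comp hg'
    _ = μ.toSphere univ * ∫⁻ r : Ioi (0 : ℝ), g r ∂.volumeIoiPow (Module.finrank ℝ E - 1) := by
        rw [lintegral_prod _ hg'.aemeasurable]
        simp [lintegral_const, mul_comm]
    _ = _ := by
        rw [Measure.volumeIoiPow, lintegral_withDensity_eq_lintegral_mul _
          (measurable_subtype_coe.pow_const _).ennreal_ofReal
          (show Measurable fun r : Ioi (0 : ℝ) => g r from hg.comp measurable_subtype_coe)]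
        exact congrArg _ (lintegral_subtype_comap measurableSet_Ioi
          fun r => ENNReal.ofReal (r ^ (Module.finrank ℝ E - 1)) * g r)

end

end MeasureTheory

local notation "ℝ³" => EuclideanSpace ℝ (Fin 3)

noncomputable def radialKernel (R r : ℝ) : ℝ :=
  if 1 < R + r then 1 / ((R + r) ^ 2 * √(1 + (R - r) ^ 2)) else 0

theorem radialKernel_nonneg (R r : ℝ) : 0 ≤ radialKernel R r := by
  unfold radialKernel; split_ifs <;> positivity

theorem measurable_radialKernel (R : ℝ) : Measurable (radialKernel R) :=
  Measurable.ite (measurableSet_lt measurable_const (measurable_const.add measurable_id))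
    (by fun_prop) measurable_const

theorem sq_mul_radialKernel_rpow_le {q R r : ℝ} (hq : 1 ≤ q) (hR : 0 ≤ R) (hr : 0 ≤ r) :
    r ^ 2 * radialKernel R r ^ q ≤ (1 + (r - R) ^ 2) ^ (-q / 2) := by
  have hb : 0 < 1 + (r - R) ^ 2 := by positivity
  unfold radialKernel
  split_ifs with h
  · set a := (R + r) ^ 2
    have ha : 1 ≤ a := by nlinarith
    have hfactor :
        (1 / (a * √(1 + (R - r) ^ 2))) ^ q = a ^ (-q) * (1 + (r - R) ^ 2) ^ (-q / 2) := by
      rw [← neg_sub r R, neg_sq, sqrt_eq_rpow, one_div, inv_rpow (by positivity),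
        ← rpow_neg (by positivity), mul_rpow (by positivity) (by positivity), ← rpow_mul hb.le]
      ring_nf
    have hweight : r ^ 2 * a ^ (-q) ≤ 1 :=
      calc r ^ 2 * a ^ (-q) ≤ a * a ^ (-1 : ℝ) :=
            mul_le_mul (by nlinarith) (rpow_le_rpow_of_exponent_le ha (by linarith))
              (by positivity) (by positivity)
        _ = 1 := by rw [rpow_neg_one, mul_inv_cancel₀ (by positivity)]
    calc r ^ 2 * (1 / (a * √(1 + (R - r) ^ 2))) ^ q
        = r ^ 2 * a ^ (-q) * (1 + (r - R) ^ 2) ^ (-q / 2) := by rw [hfactor, mul_assoc]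
      _ ≤ 1 * (1 + (r - R) ^ 2) ^ (-q / 2) := by gcongr
      _ = _ := one_mul _
  · rw [zero_rpow (by positivity), mul_zero]
    positivity

theorem lintegral_radialKernel_rpow_le {q R : ℝ} (hq : 1 ≤ q) (hR : 0 ≤ R) :
    ∫⁻ w : ℝ³, ENNReal.ofReal (radialKernel R ‖w‖ ^ q) ≤
      (volume : Measure ℝ³).toSphere univ * ∫⁻ s : ℝ, ENNReal.ofReal ((1 + s ^ 2) ^ (-q / 2)) := by
  rw [lintegral_comp_norm_addHaar volume
    (measurable_radialKernel R |>.pow_const q).ennreal_ofReal, finrank_euclideanSpace_fin]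
  refine mul_le_mul_right ?_ _
  calc ∫⁻ r in Ioi 0, ENNReal.ofReal (r ^ 2) * ENNReal.ofReal (radialKernel R r ^ q)
      ≤ ∫⁻ r in Ioi 0, ENNReal.ofReal ((1 + (r - R) ^ 2) ^ (-q / 2)) :=
        setLIntegral_mono (by fun_prop) fun r hr => by
          rw [← ENNReal.ofReal_mul (by positivity)]
          exact ENNReal.ofReal_le_ofReal (sq_mul_radialKernel_rpow_le hq hR (le_of_lt hr))
    _ ≤ ∫⁻ r, ENNReal.ofReal ((1 + (r - R) ^ 2) ^ (-q / 2)) := setLIntegral_le_lintegral _ _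
    _ = _ := lintegral_sub_right_eq_self (fun s => ENNReal.ofReal ((1 + s ^ 2) ^ (-q / 2))) R

theorem lintegral_one_add_sq_rpow_neg_lt_top {q : ℝ} (hq : 1 < q) :
    ∫⁻ s : ℝ, ENNReal.ofReal ((1 + s ^ 2) ^ (-q / 2)) < ∞ := by
  simpa using
    (integrable_rpow_neg_one_add_norm_sq (E := ℝ) (r := q) (by simpa using hq)).lintegral_lt_top

noncomputable def radialKernelLpBound (q : ℝ) : ℝ≥0∞ :=
  ((volume : Measure ℝ³).toSphere univ *
    ∫⁻ s : ℝ, ENNReal.ofReal ((1 + s ^ 2) ^ (-q / 2))) ^ (1 / q)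

theorem radialKernelLpBound_ne_top {q : ℝ} (hq : 1 < q) : radialKernelLpBound q ≠ ∞ :=
  ENNReal.rpow_ne_top_of_nonneg (one_div_nonneg.2 (by linarith)) <|
    ENNReal.mul_ne_top (measure_ne_top _ _) (lintegral_one_add_sq_rpow_neg_lt_top hq).ne

theorem eLpNorm_radialKernel_comp_sub_le {q R : ℝ} (hq : 1 ≤ q) (hR : 0 ≤ R) (z : ℝ³) :
    eLpNorm (fun y => radialKernel R ‖z - y‖) (ENNReal.ofReal q) volume ≤
      radialKernelLpBound q := by
  have hq0 : 0 < q := by linarith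
  have hmeas : Measurable fun w : ℝ³ => radialKernel R ‖w‖ :=
    (measurable_radialKernel R).comp measurable_norm
  rw [show (fun y => radialKernel R ‖z - y‖) = (fun w => radialKernel R ‖w‖) ∘ (z - ·) from rfl,
    eLpNorm_comp_measurePreserving hmeas.aestronglyMeasurable
      (Measure.measurePreserving_sub_left volume z),
    eLpNorm_eq_lintegral_rpow_enorm_toReal (by simpa using hq0) ENNReal.ofReal_ne_top,
    ENNReal.toReal_ofReal hq0.le, radialKernelLpBound]
  gcongr
  calc ∫⁻ w : ℝ³, ‖radialKernel R ‖w‖‖ₑ ^ q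
      = ∫⁻ w : ℝ³, ENNReal.ofReal (radialKernel R ‖w‖ ^ q) := by
        simp only [Real.enorm_eq_ofReal (radialKernel_nonneg _ _),
          ENNReal.ofReal_rpow_of_nonneg (radialKernel_nonneg _ _) hq0.le]
    _ ≤ _ := lintegral_radialKernel_rpow_le hq hR

/-- Hölder-based `y`-integration bound: for `p ∈ (1, ∞)` there is `C_p` such that for all
`x, η, z ∈ ℝ³` and `ψ ∈ L^p`,
`∫ χ(|x−η|+|z−y|>1)/((|x−η|+|z−y|)² ⟨|x−η|−|z−y|⟩) |ψ(y)| dy ≤ C_p ‖ψ‖_{L^p}`. -/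
theorem holder_y_integration_bound (p : ℝ) (hp : 1 < p) :
    ∃ C : ℝ, 0 < C ∧
      ∀ (x η z : EuclideanSpace ℝ (Fin 3)) (ψ : EuclideanSpace ℝ (Fin 3) → ℝ),
        MemLp ψ (ENNReal.ofReal p) →
        (∫ y : EuclideanSpace ℝ (Fin 3),
            (if 1 < ‖x - η‖ + ‖z - y‖ then
              1 / ((‖x - η‖ + ‖z - y‖) ^ 2
                * Real.sqrt (1 + (‖x - η‖ - ‖z - y‖) ^ 2)) else 0) * |ψ y|)
          ≤ C * (eLpNorm ψ (ENNReal.ofReal p) volume).toReal := by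
  set q := p.conjExponent
  have hpq : p.HolderConjugate q := .conjExponent hp
  have := hpq.symm.ennrealOfReal
  have hB := radialKernelLpBound_ne_top hpq.symm.lt
  refine ⟨(radialKernelLpBound q).toReal + 1, by positivity, fun x η z ψ hψ => ?_⟩
  set K := fun y => radialKernel ‖x - η‖ ‖z - y‖
  have hK : eLpNorm K (ENNReal.ofReal q) volume ≤ radialKernelLpBound q :=
    eLpNorm_radialKernel_comp_sub_le hpq.symm.lt.le (norm_nonneg _) z
  have hKmem : MemLp K (ENNReal.ofReal q) volume :=
    ⟨((measurable_radialKernel _).comp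
      (measurable_const.sub measurable_id).norm).aestronglyMeasurable, hK.trans_lt hB.lt_top⟩
  calc ∫ y, K y * |ψ y|
      ≤ (eLpNorm K (ENNReal.ofReal q) volume).toReal *
          (eLpNorm (fun y => |ψ y|) (ENNReal.ofReal p) volume).toReal :=
        integral_mul_le_eLpNorm_mul_eLpNorm hKmem hψ.abs
    _ ≤ ((radialKernelLpBound q).toReal + 1) * (eLpNorm ψ (ENNReal.ofReal p) volume).toReal := by
        simp only [← Real.norm_eq_abs, eLpNorm_norm]
        gcongr
        exact (ENNReal.toReal_mono hB hK).trans (le_add_of_nonneg_right zero_le_one)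
end

section
/- Uniform L^{q} bound for the commutator kernel tail: for every q ∈ (1, ∞] there is C_q such that for all R ≥ 0, ‖ w ↦ χ(R+|w| > 1)/((R+|w|)² ⟨R−|w|⟩) ‖_{L^q(ℝ³)} ≤ C_q, where the norm is over w ∈ ℝ³. -/
open MeasureTheory Real Set
open scoped ENNReal

/-!
In polar coordinates the `q`-th power of the kernel integrates to
`|S²| ∫₀^∞ r² χ(R + r > 1) / ((R + r)^{2q} ⟨R - r⟩^q) dr`. On the support `1 < R + r`,
so `r² ≤ (R + r)² ≤ (R + r)^{2q}` and the integrand is at most `⟨R - r⟩^{-q}`, whose integral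
over `ℝ` is finite for `q > 1` and independent of `R` by translation invariance. For `q = ∞`
the kernel is simply bounded by `1`.
-/

noncomputable def kernelTail (R r : ℝ) : ℝ :=
  if 1 < R + r then 1 / ((R + r) ^ 2 * √(1 + (R - r) ^ 2)) else 0

lemma kernelTail_nonneg (R r : ℝ) : 0 ≤ kernelTail R r := by
  unfold kernelTail
  split_ifs <;> positivity

lemma kernelTail_le_one (R r : ℝ) : kernelTail R r ≤ 1 := by
  unfold kernelTail
  split_ifs with h
  · have hsqrt : 1 ≤ √(1 + (R - r) ^ 2) := Real.one_le_sqrt.mpr (by nlinarith)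
    rw [div_le_one (by positivity)]
    nlinarith
  · exact zero_le_one

lemma measurable_kernelTail (R : ℝ) : Measurable (kernelTail R) :=
  Measurable.ite (measurableSet_lt measurable_const (by fun_prop)) (by fun_prop) measurable_const

lemma sq_mul_kernelTail_rpow_le {p R r : ℝ} (hp : 1 ≤ p) (hR : 0 ≤ R) (hr : 0 ≤ r) :
    r ^ 2 * kernelTail R r ^ p ≤ (1 + (R - r) ^ 2) ^ (-p / 2) := by
  unfold kernelTail
  split_ifs with h
  · have hA : 1 ≤ (R + r) ^ 2 := by nlinarith
    have hB : 0 ≤ 1 + (R - r) ^ 2 := by positivity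
    have hdecay : r ^ 2 * ((R + r) ^ 2) ^ (-p) ≤ 1 := calc
      r ^ 2 * ((R + r) ^ 2) ^ (-p) ≤ r ^ 2 * ((R + r) ^ 2) ^ (-1 : ℝ) := by
        gcongr
      _ = r ^ 2 / (R + r) ^ 2 := by rw [Real.rpow_neg_one, div_eq_mul_inv]
      _ ≤ 1 := by rw [div_le_one (by positivity)]; nlinarith
    calc r ^ 2 * (1 / ((R + r) ^ 2 * √(1 + (R - r) ^ 2))) ^ p
        = r ^ 2 * ((R + r) ^ 2) ^ (-p) * (1 + (R - r) ^ 2) ^ (-p / 2) := by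
          rw [one_div, Real.inv_rpow (by positivity),
            Real.mul_rpow (by positivity) (Real.sqrt_nonneg _), Real.sqrt_eq_rpow,
            ← Real.rpow_mul hB, mul_inv, Real.rpow_neg (by positivity), ← Real.rpow_neg hB]
          ring_nf
      _ ≤ 1 * (1 + (R - r) ^ 2) ^ (-p / 2) := by gcongr
      _ = _ := one_mul _
  · rw [Real.zero_rpow (by positivity), mul_zero]
    positivity

lemma lintegral_ofReal_one_add_sq_rpow_neg_lt_top {p : ℝ} (hp : 1 < p) :
    ∫⁻ s : ℝ, ENNReal.ofReal ((1 + s ^ 2) ^ (-p / 2)) < ⊤ := by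
  have h : Integrable fun s : ℝ => (1 + ‖s‖ ^ 2) ^ (-p / 2) :=
    integrable_rpow_neg_one_add_norm_sq (by simpa)
  simpa [sq_abs] using h.lintegral_lt_top

lemma eLpNorm_top_kernelTail_le_one {α : Type*} [MeasurableSpace α] (μ : Measure α) (g : α → ℝ)
    (R : ℝ) : eLpNorm (fun x => kernelTail R (g x)) ∞ μ ≤ 1 := by
  rw [eLpNorm_exponent_top, ← ENNReal.ofReal_one]
  refine eLpNormEssSup_le_of_ae_bound (.of_forall fun x => ?_)
  rw [Real.norm_of_nonneg (kernelTail_nonneg R _)]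
  exact kernelTail_le_one R _

section Radial

variable {E : Type*} [NormedAddCommGroup E] [NormedSpace ℝ E]
  [MeasurableSpace E] [BorelSpace E] [FiniteDimensional ℝ E]
  (μ : Measure E) [μ.IsAddHaarMeasure]

lemma lintegral_fun_norm_addHaar [Nontrivial E] (f : ℝ → ℝ≥0∞) (hf : Measurable f) :
    ∫⁻ x, f ‖x‖ ∂μ =
      μ.toSphere univ *
        ∫⁻ y in Ioi (0 : ℝ), ENNReal.ofReal (y ^ (Module.finrank ℝ E - 1)) * f y := calc
  ∫⁻ x, f ‖x‖ ∂μ = ∫⁻ x : ({(0 : E)}ᶜ : Set E), f ‖x.1‖ ∂(μ.comap (↑)) := by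
    rw [lintegral_subtype_comap (measurableSet_singleton _).compl (fun x => f ‖x‖),
      restrict_compl_singleton]
  _ = ∫⁻ y : Metric.sphere (0 : E) 1 × Ioi (0 : ℝ), f y.2
        ∂(μ.toSphere.prod (.volumeIoiPow (Module.finrank ℝ E - 1))) := by
    refine Eq.trans ?_ (μ.measurePreserving_homeomorphUnitSphereProd.lintegral_comp
      (hf.comp (measurable_subtype_coe.comp measurable_snd)))
    simp
  _ = μ.toSphere univ *
        ∫⁻ z : Ioi (0 : ℝ), f z ∂(Measure.volumeIoiPow (Module.finrank ℝ E - 1)) := by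
    rw [lintegral_prod (fun y : Metric.sphere (0 : E) 1 × Ioi (0 : ℝ) => f y.2)
      (hf.comp (measurable_subtype_coe.comp measurable_snd)).aemeasurable]
    simp [lintegral_const, mul_comm]
  _ = _ := by
    rw [Measure.volumeIoiPow, lintegral_withDensity_eq_lintegral_mul _
        (measurable_subtype_coe.pow_const _).ennreal_ofReal
        (show Measurable fun z : Ioi (0 : ℝ) => f z from hf.comp measurable_subtype_coe),
      ← lintegral_subtype_comap measurableSet_Ioi]
    rfl

lemma lintegral_kernelTail_rpow_le (hE : Module.finrank ℝ E = 3) {p R : ℝ} (hp : 1 ≤ p)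
    (hR : 0 ≤ R) :
    ∫⁻ w, ENNReal.ofReal (kernelTail R ‖w‖) ^ p ∂μ ≤
      μ.toSphere univ * ∫⁻ s : ℝ, ENNReal.ofReal ((1 + s ^ 2) ^ (-p / 2)) := by
  have : Nontrivial E := Module.nontrivial_of_finrank_eq_succ hE
  calc ∫⁻ w, ENNReal.ofReal (kernelTail R ‖w‖) ^ p ∂μ
      = μ.toSphere univ *
          ∫⁻ r in Ioi (0 : ℝ), ENNReal.ofReal (r ^ 2) * ENNReal.ofReal (kernelTail R r) ^ p := by
        rw [lintegral_fun_norm_addHaar μ _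
          ((measurable_kernelTail R).ennreal_ofReal.pow_const p), hE]
    _ ≤ μ.toSphere univ *
          ∫⁻ r in Ioi (0 : ℝ), ENNReal.ofReal ((1 + (R - r) ^ 2) ^ (-p / 2)) := by
        gcongr μ.toSphere univ * ?_
        refine setLIntegral_mono' measurableSet_Ioi fun r (hr : 0 < r) => ?_
        rw [ENNReal.ofReal_rpow_of_nonneg (kernelTail_nonneg R r) (by positivity),
          ← ENNReal.ofReal_mul (by positivity)]
        exact ENNReal.ofReal_le_ofReal (sq_mul_kernelTail_rpow_le hp hR hr.le)
    _ ≤ μ.toSphere univ * ∫⁻ r, ENNReal.ofReal ((1 + (R - r) ^ 2) ^ (-p / 2)) := by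
        gcongr
        exact Measure.restrict_le_self
    _ = μ.toSphere univ * ∫⁻ s : ℝ, ENNReal.ofReal ((1 + s ^ 2) ^ (-p / 2)) := by
        rw [lintegral_sub_left_eq_self (fun s => ENNReal.ofReal ((1 + s ^ 2) ^ (-p / 2))) R]

lemma eLpNorm_kernelTail_le (hE : Module.finrank ℝ E = 3) {p R : ℝ} (hp : 1 ≤ p)
    (hR : 0 ≤ R) :
    eLpNorm (fun w => kernelTail R ‖w‖) (ENNReal.ofReal p) μ ≤
      (μ.toSphere univ * ∫⁻ s : ℝ, ENNReal.ofReal ((1 + s ^ 2) ^ (-p / 2))) ^ (1 / p) := by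
  have hp0 : 0 < p := by linarith
  rw [eLpNorm_eq_lintegral_rpow_enorm_toReal (by simpa using hp0) ENNReal.ofReal_ne_top,
    ENNReal.toReal_ofReal hp0.le]
  gcongr
  simp only [Real.enorm_of_nonneg (kernelTail_nonneg _ _)]
  exact lintegral_kernelTail_rpow_le μ hE hp hR

end Radial

/-- Uniform `L^q` bound for the commutator kernel tail: for every `q ∈ (1, ∞]` there is a
finite constant `C_q` such that for all `R ≥ 0`,
`‖ w ↦ χ(R+|w|>1)/((R+|w|)² ⟨R−|w|⟩) ‖_{L^q(ℝ³)} ≤ C_q`. -/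
theorem commutator_kernel_tail_Lq_uniform (q : ℝ≥0∞) (hq : 1 < q) :
    ∃ C : ℝ≥0∞, C ≠ ⊤ ∧ ∀ R : ℝ, 0 ≤ R →
      eLpNorm (fun w : EuclideanSpace ℝ (Fin 3) =>
          if 1 < R + ‖w‖ then
            1 / ((R + ‖w‖) ^ 2 * Real.sqrt (1 + (R - ‖w‖) ^ 2)) else 0)
        q volume ≤ C := by
  rcases eq_or_ne q ⊤ with rfl | hq_top
  · exact ⟨1, ENNReal.one_ne_top, fun R _ => eLpNorm_top_kernelTail_le_one volume (‖·‖) R⟩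
  have hp : 1 < q.toReal := by
    simpa using ENNReal.toReal_strict_mono hq_top hq
  have bound := fun R (hR : 0 ≤ R) =>
    eLpNorm_kernelTail_le (volume : Measure (EuclideanSpace ℝ (Fin 3))) (by simp) hp.le hR
  simp only [ENNReal.ofReal_toReal hq_top] at bound
  have hI := lintegral_ofReal_one_add_sq_rpow_neg_lt_top hp
  exact ⟨_, ENNReal.rpow_ne_top_of_nonneg (by positivity)
    (ENNReal.mul_ne_top (measure_ne_top _ _) hI.ne), bound⟩
end
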